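/- There exists a norm ‖·‖ on c₀₀ satisfying equation (2.2), i.e. ‖x‖ = max{ ‖x‖_∞, sup{ (1/f(ℓ)) ∑_{i=1}^ℓ |||E_i x|||_{m_i} : ℓ ∈ ℕ, ((m_i, E_i))_{i=1}^ℓ admissible } } for every x ∈ c₀₀, where |||x|||_m = sup{ (1/m) ∑_{i=1}^m ‖F_i x‖ : F₁ < ⋯ < F_m } for m ≥ 2. Moreover for this norm ‖e_i‖ = 1 for all i, and the norm is 1-unconditional and 1-subsymmetric: ‖∑_i ε_i a_i e_{k_i}‖ = ‖∑_i a_i e_i‖ for all x = ∑ a_i e_i ∈ c₀₀, signs ε_i ∈ {−1,1} and strictly increasing indices k₁ < k₂ < ⋯. -/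

import Mathlib

open Finset

/-- `c₀₀`: finitely supported functions `ℕ → ℝ`. -/
abbrev C00 := ℕ →₀ ℝ

/-- `f(t) = log₂(1+t)`. -/
noncomputable def f (t : ℝ) : ℝ := Real.logb 2 (1 + t)

/-- `E < F` for finite sets: every element of `E` is less than every element of `F`. -/
def FinsetLT (E F : Finset ℕ) : Prop := ∀ i ∈ E, ∀ j ∈ F, i < j

/-- `Ex`: coordinatewise product of `x` with the indicator of `E`. -/
noncomputable def restr (E : Finset ℕ) (x : C00) : C00 := x.filter (· ∈ E)

/-- `N` is a norm on `c₀₀`. -/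
def IsNorm (N : C00 → ℝ) : Prop :=
  (∀ x y, N (x + y) ≤ N x + N y) ∧
  (∀ (c : ℝ) (x), N (c • x) = |c| * N x) ∧
  (∀ x, x ≠ 0 → 0 < N x)

/-- the sup norm `‖x‖_∞`. -/
noncomputable def supNorm (x : C00) : ℝ := ⨆ i, |x i|

/-- `((m_i, E_i))_{i=1}^ℓ` is admissible: `2 ≤ m₁ < ⋯ < m_ℓ`, `E₁ < ⋯ < E_ℓ`,
and `f(m_{i+1}) > ∑_{j=1}^i |E_j|`. -/
def Admissible (ℓ : ℕ) (m : Fin ℓ → ℕ) (E : Fin ℓ → Finset ℕ) : Prop :=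
  (∀ i, 2 ≤ m i) ∧ StrictMono m ∧
  (∀ i j : Fin ℓ, i < j → FinsetLT (E i) (E j)) ∧
  ∀ i j : Fin ℓ, (i : ℕ) + 1 = (j : ℕ) →
    (∑ t ∈ Finset.Iic i, ((E t).card : ℝ)) < f (m j)

/-- `|||x|||_m = sup{(1/m) ∑_{i=1}^m ‖F_i x‖ : F₁ < ⋯ < F_m}`. -/
noncomputable def tnorm (N : C00 → ℝ) (m : ℕ) (x : C00) : ℝ :=
  sSup {r | ∃ F : Fin m → Finset ℕ,
    (∀ i j : Fin m, i < j → FinsetLT (F i) (F j)) ∧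
    r = (1 / (m : ℝ)) * ∑ i, N (restr (F i) x)}

/-- `‖x‖_ℓ = sup{(1/f(ℓ)) ∑_{i=1}^ℓ |||E_i x|||_{m_i} : ((m_i,E_i))_{i=1}^ℓ admissible}`. -/
noncomputable def normL (N : C00 → ℝ) (ℓ : ℕ) (x : C00) : ℝ :=
  sSup {r | ∃ (m : Fin ℓ → ℕ) (E : Fin ℓ → Finset ℕ), Admissible ℓ m E ∧
    r = (1 / f ℓ) * ∑ i, tnorm N (m i) (restr (E i) x)}

/-- `‖x‖_{(ℓ,m₀)}`: as `‖x‖_ℓ` but restricted to admissible families with `m₁ ≥ m₀`. -/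
noncomputable def normLM (N : C00 → ℝ) (ℓ m₀ : ℕ) (x : C00) : ℝ :=
  sSup {r | ∃ (m : Fin ℓ → ℕ) (E : Fin ℓ → Finset ℕ), Admissible ℓ m E ∧
    (∀ i, m₀ ≤ m i) ∧
    r = (1 / f ℓ) * ∑ i, tnorm N (m i) (restr (E i) x)}

/-- Equation (2.2):
`‖x‖ = max{‖x‖_∞, sup{(1/f(ℓ)) ∑ |||E_i x|||_{m_i} : ℓ ∈ ℕ, ((m_i,E_i)) admissible}}`. -/
def Eq22 (N : C00 → ℝ) : Prop :=
  ∀ x, N x = max (supNorm x)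
    (sSup {r | ∃ (ℓ : ℕ) (m : Fin ℓ → ℕ) (E : Fin ℓ → Finset ℕ), Admissible ℓ m E ∧
      r = (1 / f ℓ) * ∑ i, tnorm N (m i) (restr (E i) x)})

/-- A finite block basis: nonzero vectors with successive supports. -/
def BlockSeqFin {n : ℕ} (y : Fin n → C00) : Prop :=
  (∀ i, y i ≠ 0) ∧ ∀ i j : Fin n, i < j → FinsetLT (y i).support (y j).support

/-- An infinite block basis of `(e_i)`: nonzero vectors with successive supports. -/
def BlockSeqInf (y : ℕ → C00) : Prop :=
  (∀ i, y i ≠ 0) ∧ ∀ i, FinsetLT (y i).support (y (i + 1)).support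

/-- `(z_k)_{k=1}^n` is a (finite) block basis of `(y_i)`. -/
def FiniteBlockOf {n : ℕ} (z : Fin n → C00) (y : ℕ → C00) : Prop :=
  ∃ (B : Fin n → Finset ℕ) (c : ℕ → ℝ),
    (∀ k k' : Fin n, k < k' → FinsetLT (B k) (B k')) ∧
    (∀ k, z k = ∑ i ∈ B k, c i • y i) ∧ ∀ k, z k ≠ 0

/-- `x` is an `ℓ_p^k`-average with constant `C`. -/
def IsLpAverage (N : C00 → ℝ) (p : ℝ) (k : ℕ) (C : ℝ) (x : C00) : Prop :=
  ∃ y : Fin k → C00, BlockSeqFin y ∧ (∀ i, N (y i) = 1) ∧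
    (∀ a : Fin k → ℝ,
      C⁻¹ * (∑ i, |a i| ^ p) ^ (1 / p) ≤ N (∑ i, a i • y i) ∧
      N (∑ i, a i • y i) ≤ C * (∑ i, |a i| ^ p) ^ (1 / p)) ∧
    x = ((k : ℝ) ^ (-(1 / p))) • ∑ i, y i

/-- `C_p = 4(1 - 2^{-1/p})⁻¹`. -/
noncomputable def Cp (p : ℝ) : ℝ := 4 * (1 - (2 : ℝ) ^ (-(1 / p)))⁻¹

/-! The norm is the greatest fixed point of the right-hand side `Φ` of (2.2), viewed as a monotone
operator on functions `c₀₀ → ℝ` (Knaster–Tarski). As long as `M ≤ ‖·‖_{ℓ¹}`, all suprema in `Φ M`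
are finite and again bounded by `‖·‖_{ℓ¹}`, and `Φ` preserves subadditivity, homogeneity and
invariance under sign changes and spreading. Hence the pointwise supremum `N` of all such seminorms
with `‖·‖_∞ ≤ M ≤ Φ M` is one of them, so `N ≤ Φ N` by monotonicity, while `Φ N` belongs to the
family, so `Φ N ≤ N`. Squeezed between `‖·‖_∞` and `‖·‖_{ℓ¹}`, `N` is a norm with `N eᵢ = 1`. -/

lemma smul_eq_abs_mul_of_le {E : Type*} [AddCommGroup E] [Module ℝ E] {g : E → ℝ}
    (hg : ∀ (c : ℝ) (x : E), g (c • x) ≤ |c| * g x) (hg0 : 0 ≤ g 0) (c : ℝ) (x : E) :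
    g (c • x) = |c| * g x := by
  rcases eq_or_ne c 0 with rfl | hc
  · simpa using le_antisymm (by simpa using hg 0 0) hg0
  refine le_antisymm (hg c x) ?_
  have h := hg c⁻¹ (c • x)
  rw [smul_smul, inv_mul_cancel₀ hc, one_smul, abs_inv] at h
  calc |c| * g x ≤ |c| * (|c|⁻¹ * g (c • x)) := by gcongr
    _ = g (c • x) := by field_simp

lemma restr_apply (E : Finset ℕ) (x : C00) (j : ℕ) :
    restr E x j = if j ∈ E then x j else 0 :=
  Finsupp.filter_apply _ _ _

lemma restr_zero (E : Finset ℕ) : restr E 0 = 0 := Finsupp.filter_zero _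

lemma restr_add (E : Finset ℕ) (x y : C00) : restr E (x + y) = restr E x + restr E y :=
  Finsupp.filter_add

lemma restr_smul (E : Finset ℕ) (c : ℝ) (x : C00) : restr E (c • x) = c • restr E x :=
  Finsupp.filter_smul

def Successive {n : ℕ} (F : Fin n → Finset ℕ) : Prop :=
  ∀ i j : Fin n, i < j → FinsetLT (F i) (F j)

lemma successive_const_empty (n : ℕ) : Successive (fun _ : Fin n => (∅ : Finset ℕ)) :=
  fun _ _ _ _ h => absurd h (Finset.notMem_empty _)

lemma Successive.pairwise_disjoint {n : ℕ} {F : Fin n → Finset ℕ} (hF : Successive F) :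
    Pairwise (Function.onFun Disjoint F) := by
  intro i j hij
  refine Finset.disjoint_left.2 fun t hi hj => ?_
  rcases hij.lt_or_gt with h | h
  · exact lt_irrefl t (hF i j h t hi t hj)
  · exact lt_irrefl t (hF j i h t hj t hi)

section Spread

variable {κ : ℕ → ℕ}

lemma Successive.preimage {n : ℕ} {F : Fin n → Finset ℕ} (hF : Successive F)
    (hκ : StrictMono κ) : Successive fun i => (F i).preimage κ hκ.injective.injOn :=
  fun i j hij _ ha _ hb => hκ.lt_iff_lt.1 (hF i j hij _ (mem_preimage.1 ha) _ (mem_preimage.1 hb))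

lemma Successive.image {n : ℕ} {F : Fin n → Finset ℕ} (hF : Successive F)
    (hκ : StrictMono κ) : Successive fun i => (F i).image κ := by
  intro i j hij a ha b hb
  obtain ⟨s, hs, rfl⟩ := mem_image.1 ha
  obtain ⟨t, ht, rfl⟩ := mem_image.1 hb
  exact hκ (hF i j hij s hs t ht)

lemma preimage_image_of_injective (hκ : Function.Injective κ) (B : Finset ℕ) :
    (B.image κ).preimage κ hκ.injOn = B :=
  Finset.coe_injective (by simp [Set.preimage_image_eq _ hκ])

end Spread

noncomputable def l1Norm (x : C00) : ℝ := ∑ i ∈ x.support, |x i|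

lemma l1Norm_nonneg (x : C00) : 0 ≤ l1Norm x := sum_nonneg fun _ _ => abs_nonneg _

lemma abs_apply_le_l1Norm (x : C00) (i : ℕ) : |x i| ≤ l1Norm x := by
  by_cases h : i ∈ x.support
  · exact single_le_sum (fun j _ => abs_nonneg (x j)) h
  · rw [Finsupp.notMem_support_iff.1 h, abs_zero]
    exact l1Norm_nonneg x

lemma l1Norm_restr (E : Finset ℕ) (x : C00) :
    l1Norm (restr E x) = ∑ i ∈ x.support with i ∈ E, |x i| := by
  rw [l1Norm, restr, Finsupp.support_filter]
  exact sum_congr rfl fun i hi => by rw [Finsupp.filter_apply_pos _ _ (mem_filter.1 hi).2]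

lemma Successive.sum_l1Norm_restr_le {n : ℕ} {F : Fin n → Finset ℕ} (hF : Successive F)
    (x : C00) : ∑ i, l1Norm (restr (F i) x) ≤ l1Norm x := by
  have hdisj : (↑(univ : Finset (Fin n)) : Set (Fin n)).PairwiseDisjoint
      fun i => {t ∈ x.support | t ∈ F i} := fun i _ j _ hij =>
    disjoint_filter.2 fun _ _ hi hj => disjoint_left.1 (hF.pairwise_disjoint hij) hi hj
  simp only [l1Norm_restr]
  rw [← sum_biUnion hdisj]
  exact sum_le_sum_of_subset_of_nonneg (biUnion_subset.2 fun i _ => filter_subset _ _)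
    fun i _ _ => abs_nonneg _

lemma mul_sum_restr_le_l1Norm {n : ℕ} {g : Fin n → C00 → ℝ} (hg : ∀ i y, g i y ≤ l1Norm y)
    {F : Fin n → Finset ℕ} (hF : Successive F) {c : ℝ} (hc0 : 0 ≤ c) (hc1 : c ≤ 1) (x : C00) :
    c * ∑ i, g i (restr (F i) x) ≤ l1Norm x :=
  calc c * ∑ i, g i (restr (F i) x) ≤ c * l1Norm x := by
        gcongr
        exact (sum_le_sum fun i _ => hg i _).trans (hF.sum_l1Norm_restr_le x)
    _ ≤ l1Norm x := mul_le_of_le_one_left (l1Norm_nonneg x) hc1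

lemma supNorm_bddAbove (x : C00) : BddAbove (Set.range fun i => |x i|) :=
  ⟨l1Norm x, Set.forall_mem_range.2 (abs_apply_le_l1Norm x)⟩

lemma abs_apply_le_supNorm (x : C00) (i : ℕ) : |x i| ≤ supNorm x :=
  le_ciSup (supNorm_bddAbove x) i

lemma supNorm_nonneg (x : C00) : 0 ≤ supNorm x := (abs_nonneg _).trans (abs_apply_le_supNorm x 0)

lemma supNorm_le_l1Norm (x : C00) : supNorm x ≤ l1Norm x := ciSup_le (abs_apply_le_l1Norm x)

lemma supNorm_pos {x : C00} (hx : x ≠ 0) : 0 < supNorm x := by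
  obtain ⟨i, hi⟩ := Finsupp.ne_iff.1 hx
  exact (abs_pos.2 hi).trans_le (abs_apply_le_supNorm x i)

lemma supNorm_add_le (x y : C00) : supNorm (x + y) ≤ supNorm x + supNorm y :=
  ciSup_le fun i => (abs_add_le (x i) (y i)).trans
    (add_le_add (abs_apply_le_supNorm x i) (abs_apply_le_supNorm y i))

lemma supNorm_smul (c : ℝ) (x : C00) : supNorm (c • x) = |c| * supNorm x := by
  refine smul_eq_abs_mul_of_le (g := supNorm) (fun c x => ciSup_le fun i => ?_)
    (supNorm_nonneg 0) c x
  rw [Finsupp.smul_apply, smul_eq_mul, abs_mul]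
  exact mul_le_mul_of_nonneg_left (abs_apply_le_supNorm x i) (abs_nonneg c)

lemma supNorm_single_one (i : ℕ) : supNorm (Finsupp.single i 1) = 1 := by
  refine le_antisymm (ciSup_le fun j => ?_)
    (by simpa using abs_apply_le_supNorm (Finsupp.single i 1) i)
  rw [Finsupp.single_apply]
  split_ifs <;> simp

lemma l1Norm_single_one (i : ℕ) : l1Norm (Finsupp.single i 1) = 1 := by
  simp [l1Norm]

noncomputable def signSpread (ε : ℕ → ℝ) (κ : ℕ → ℕ) (x : C00) : C00 :=
  ∑ i ∈ x.support, (ε i * x i) • Finsupp.single (κ i) (1 : ℝ)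

section Spread

variable {ε : ℕ → ℝ} {κ : ℕ → ℕ}

lemma signSpread_apply_apply (hκ : Function.Injective κ) (x : C00) (t : ℕ) :
    signSpread ε κ x (κ t) = ε t * x t := by
  rw [signSpread, Finsupp.finsetSum_apply, sum_eq_single t]
  · simp
  · intro i _ hit
    simp [hκ.ne hit]
  · intro ht
    simp [Finsupp.notMem_support_iff.1 ht]

lemma signSpread_apply_of_notMem_range {j : ℕ} (hj : j ∉ Set.range κ) (x : C00) :
    signSpread ε κ x j = 0 := by
  rw [signSpread, Finsupp.finsetSum_apply]
  exact sum_eq_zero fun i _ => by simp [show κ i ≠ j from fun h => hj ⟨i, h⟩]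

lemma restr_signSpread (hκ : Function.Injective κ) (B : Finset ℕ) (x : C00) :
    restr B (signSpread ε κ x) = signSpread ε κ (restr (B.preimage κ hκ.injOn) x) := by
  ext j
  by_cases hj : j ∈ Set.range κ
  · obtain ⟨t, rfl⟩ := hj
    simp only [restr_apply, signSpread_apply_apply hκ, mem_preimage]
    split_ifs <;> simp
  · simp [restr_apply, signSpread_apply_of_notMem_range hj]

lemma restr_image_signSpread (hκ : Function.Injective κ) (B : Finset ℕ) (x : C00) :
    restr (B.image κ) (signSpread ε κ x) = signSpread ε κ (restr B x) := by
  rw [restr_signSpread hκ, preimage_image_of_injective hκ]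

lemma supNorm_signSpread (hε : ∀ i, |ε i| = 1) (hκ : Function.Injective κ) (x : C00) :
    supNorm (signSpread ε κ x) = supNorm x := by
  refine le_antisymm (ciSup_le fun j => ?_) (ciSup_le fun t => ?_)
  · by_cases hj : j ∈ Set.range κ
    · obtain ⟨t, rfl⟩ := hj
      rw [signSpread_apply_apply hκ, abs_mul, hε, one_mul]
      exact abs_apply_le_supNorm x t
    · rw [signSpread_apply_of_notMem_range hj, abs_zero]
      exact supNorm_nonneg x
  · simpa [signSpread_apply_apply hκ, abs_mul, hε] using
      abs_apply_le_supNorm (signSpread ε κ x) (κ t)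

end Spread

lemma one_div_f_nonneg (ℓ : ℕ) : 0 ≤ 1 / f ℓ :=
  one_div_nonneg.2 (Real.logb_nonneg one_lt_two (by simp))

lemma one_div_f_le_one (ℓ : ℕ) : 1 / f ℓ ≤ 1 := by
  rcases Nat.eq_zero_or_pos ℓ with rfl | hℓ
  · simp [f]
  refine div_le_one_of_le₀ ?_ (one_div_nonneg.1 (one_div_f_nonneg ℓ))
  rw [f, Real.le_logb_iff_rpow_le one_lt_two (by positivity), Real.rpow_one]
  have : (1 : ℝ) ≤ ℓ := by exact_mod_cast hℓ
  linarith

section TripleNorm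

variable {M M' : C00 → ℝ} {m : ℕ}

lemma le_tnorm (hle : ∀ y, M y ≤ l1Norm y) {F : Fin m → Finset ℕ} (hF : Successive F)
    (x : C00) : (1 / (m : ℝ)) * ∑ i, M (restr (F i) x) ≤ tnorm M m x := by
  refine le_csSup ⟨l1Norm x, ?_⟩ ⟨F, hF, rfl⟩
  rintro r ⟨G, hG, rfl⟩
  rw [one_div]
  exact mul_sum_restr_le_l1Norm (fun _ => hle) hG (by positivity) (Nat.cast_inv_le_one m) x

lemma tnorm_le_of_forall {x : C00} {a : ℝ}
    (h : ∀ F : Fin m → Finset ℕ, Successive F → (1 / (m : ℝ)) * ∑ i, M (restr (F i) x) ≤ a) :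
    tnorm M m x ≤ a :=
  csSup_le ⟨_, _, successive_const_empty m, rfl⟩ fun _ ⟨F, hF, hr⟩ => hr ▸ h F hF

lemma tnorm_le_l1Norm (hle : ∀ y, M y ≤ l1Norm y) (x : C00) : tnorm M m x ≤ l1Norm x :=
  tnorm_le_of_forall fun F hF => by
    rw [one_div]
    exact mul_sum_restr_le_l1Norm (fun _ => hle) hF (by positivity) (Nat.cast_inv_le_one m) x

lemma tnorm_mono (hle' : ∀ y, M' y ≤ l1Norm y) (h : ∀ y, M y ≤ M' y) (x : C00) :
    tnorm M m x ≤ tnorm M' m x :=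
  tnorm_le_of_forall fun F hF => by
    refine le_trans ?_ (le_tnorm hle' hF x)
    gcongr with i
    exact h _

lemma tnorm_add_le (hle : ∀ y, M y ≤ l1Norm y) (hadd : ∀ y z, M (y + z) ≤ M y + M z)
    (x y : C00) : tnorm M m (x + y) ≤ tnorm M m x + tnorm M m y :=
  tnorm_le_of_forall fun F hF =>
    calc (1 / (m : ℝ)) * ∑ i, M (restr (F i) (x + y))
        ≤ (1 / (m : ℝ)) * ∑ i, M (restr (F i) x) + (1 / (m : ℝ)) * ∑ i, M (restr (F i) y) := by
          rw [← mul_add, ← sum_add_distrib]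
          gcongr with i
          rw [restr_add]
          exact hadd _ _
      _ ≤ tnorm M m x + tnorm M m y := add_le_add (le_tnorm hle hF x) (le_tnorm hle hF y)

lemma tnorm_smul (hle : ∀ y, M y ≤ l1Norm y) (hhom : ∀ (c : ℝ) y, M (c • y) = |c| * M y)
    (c : ℝ) (x : C00) : tnorm M m (c • x) = |c| * tnorm M m x := by
  have hM0 : M 0 = 0 := by simpa using hhom 0 0
  refine smul_eq_abs_mul_of_le (g := tnorm M m) (fun c x => tnorm_le_of_forall fun F hF => ?_)
    ((le_tnorm hle (successive_const_empty m) 0).trans_eq' (by simp [restr_zero, hM0])) c x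
  simp only [restr_smul, hhom, ← mul_sum, mul_left_comm _ |c|]
  exact mul_le_mul_of_nonneg_left (le_tnorm hle hF x) (abs_nonneg c)

variable {ε : ℕ → ℝ} {κ : ℕ → ℕ}

lemma tnorm_signSpread (hle : ∀ y, M y ≤ l1Norm y) (hsym : ∀ y, M (signSpread ε κ y) = M y)
    (hκ : StrictMono κ) (x : C00) : tnorm M m (signSpread ε κ x) = tnorm M m x := by
  refine le_antisymm (tnorm_le_of_forall fun F hF => ?_) (tnorm_le_of_forall fun F hF => ?_)
  · simpa only [restr_signSpread hκ.injective, hsym] using le_tnorm hle (hF.preimage hκ) x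
  · simpa only [restr_image_signSpread hκ.injective, hsym] using
      le_tnorm hle (hF.image hκ) (signSpread ε κ x)

end TripleNorm

lemma admissible_zero : Admissible 0 (fun i => i.elim0) (fun i => i.elim0) :=
  ⟨fun i => i.elim0, fun i => i.elim0, fun i => i.elim0, fun i => i.elim0⟩

lemma Admissible.successive {ℓ : ℕ} {m : Fin ℓ → ℕ} {E : Fin ℓ → Finset ℕ}
    (h : Admissible ℓ m E) : Successive E :=
  h.2.2.1

lemma Admissible.of_card_le {ℓ : ℕ} {m : Fin ℓ → ℕ} {E E' : Fin ℓ → Finset ℕ}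
    (h : Admissible ℓ m E) (hE' : Successive E') (hcard : ∀ i, (E' i).card ≤ (E i).card) :
    Admissible ℓ m E' :=
  ⟨h.1, h.2.1, hE', fun i j hij =>
    (sum_le_sum fun t _ => by exact_mod_cast hcard t).trans_lt (h.2.2.2 i j hij)⟩

noncomputable def admissibleSup (N : C00 → ℝ) (x : C00) : ℝ :=
  sSup {r | ∃ (ℓ : ℕ) (m : Fin ℓ → ℕ) (E : Fin ℓ → Finset ℕ), Admissible ℓ m E ∧
    r = (1 / f ℓ) * ∑ i, tnorm N (m i) (restr (E i) x)}

/-- The right-hand side of (2.2) as an operator on functions: `Eq22 N` says `N` is a fixed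
point. -/
noncomputable def tsirelsonMap (N : C00 → ℝ) (x : C00) : ℝ := max (supNorm x) (admissibleSup N x)

section AdmissibleSup

variable {M M' : C00 → ℝ}

lemma le_admissibleSup (hle : ∀ y, M y ≤ l1Norm y) {ℓ : ℕ} {m : Fin ℓ → ℕ}
    {E : Fin ℓ → Finset ℕ} (hE : Admissible ℓ m E) (x : C00) :
    (1 / f ℓ) * ∑ i, tnorm M (m i) (restr (E i) x) ≤ admissibleSup M x := by
  refine le_csSup ⟨l1Norm x, ?_⟩ ⟨ℓ, m, E, hE, rfl⟩
  rintro r ⟨ℓ, m, E, hE, rfl⟩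
  exact mul_sum_restr_le_l1Norm (fun i => tnorm_le_l1Norm hle) hE.successive
    (one_div_f_nonneg ℓ) (one_div_f_le_one ℓ) x

lemma admissibleSup_le_of_forall {x : C00} {a : ℝ}
    (h : ∀ (ℓ : ℕ) (m : Fin ℓ → ℕ) (E : Fin ℓ → Finset ℕ), Admissible ℓ m E →
      (1 / f ℓ) * ∑ i, tnorm M (m i) (restr (E i) x) ≤ a) :
    admissibleSup M x ≤ a :=
  csSup_le ⟨_, 0, _, _, admissible_zero, rfl⟩ fun _ ⟨ℓ, m, E, hE, hr⟩ => hr ▸ h ℓ m E hE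

lemma admissibleSup_nonneg (hle : ∀ y, M y ≤ l1Norm y) (x : C00) : 0 ≤ admissibleSup M x :=
  (le_admissibleSup hle admissible_zero x).trans_eq' (by simp)

lemma admissibleSup_le_l1Norm (hle : ∀ y, M y ≤ l1Norm y) (x : C00) :
    admissibleSup M x ≤ l1Norm x :=
  admissibleSup_le_of_forall fun ℓ _ _ hE =>
    mul_sum_restr_le_l1Norm (fun _ => tnorm_le_l1Norm hle) hE.successive
      (one_div_f_nonneg ℓ) (one_div_f_le_one ℓ) x

lemma admissibleSup_mono (hle' : ∀ y, M' y ≤ l1Norm y) (h : ∀ y, M y ≤ M' y) (x : C00) :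
    admissibleSup M x ≤ admissibleSup M' x :=
  admissibleSup_le_of_forall fun ℓ m E hE => by
    refine le_trans ?_ (le_admissibleSup hle' hE x)
    have := one_div_f_nonneg ℓ
    gcongr with i
    exact tnorm_mono hle' h _

lemma admissibleSup_add_le (hle : ∀ y, M y ≤ l1Norm y) (hadd : ∀ y z, M (y + z) ≤ M y + M z)
    (x y : C00) : admissibleSup M (x + y) ≤ admissibleSup M x + admissibleSup M y :=
  admissibleSup_le_of_forall fun ℓ m E hE =>
    calc (1 / f ℓ) * ∑ i, tnorm M (m i) (restr (E i) (x + y))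
        ≤ (1 / f ℓ) * ∑ i, tnorm M (m i) (restr (E i) x) +
          (1 / f ℓ) * ∑ i, tnorm M (m i) (restr (E i) y) := by
          have := one_div_f_nonneg ℓ
          rw [← mul_add, ← sum_add_distrib]
          gcongr with i
          rw [restr_add]
          exact tnorm_add_le hle hadd _ _
      _ ≤ admissibleSup M x + admissibleSup M y :=
          add_le_add (le_admissibleSup hle hE x) (le_admissibleSup hle hE y)

lemma admissibleSup_smul (hle : ∀ y, M y ≤ l1Norm y)
    (hhom : ∀ (c : ℝ) y, M (c • y) = |c| * M y) (c : ℝ) (x : C00) :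
    admissibleSup M (c • x) = |c| * admissibleSup M x := by
  refine smul_eq_abs_mul_of_le (g := admissibleSup M)
    (fun c x => admissibleSup_le_of_forall fun ℓ m E hE => ?_) (admissibleSup_nonneg hle 0) c x
  simp only [restr_smul, tnorm_smul hle hhom, ← mul_sum, mul_left_comm _ |c|]
  exact mul_le_mul_of_nonneg_left (le_admissibleSup hle hE x) (abs_nonneg c)

variable {ε : ℕ → ℝ} {κ : ℕ → ℕ}

lemma admissibleSup_signSpread (hle : ∀ y, M y ≤ l1Norm y)
    (hsym : ∀ y, M (signSpread ε κ y) = M y) (hκ : StrictMono κ) (x : C00) :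
    admissibleSup M (signSpread ε κ x) = admissibleSup M x := by
  have hinj := hκ.injective
  refine le_antisymm (admissibleSup_le_of_forall fun ℓ m E hE => ?_)
    (admissibleSup_le_of_forall fun ℓ m E hE => ?_)
  · have hE' := hE.of_card_le (hE.successive.preimage hκ) fun _ =>
      card_le_card_of_injOn κ (fun _ ht => mem_preimage.1 ht) hinj.injOn
    simpa only [restr_signSpread hinj, tnorm_signSpread hle hsym hκ] using
      le_admissibleSup hle hE' x
  · have hE' := hE.of_card_le (hE.successive.image hκ) fun _ => card_image_le
    simpa only [restr_image_signSpread hinj, tnorm_signSpread hle hsym hκ] using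
      le_admissibleSup hle hE' (signSpread ε κ x)

end AdmissibleSup

section TsirelsonMap

variable {M M' : C00 → ℝ}

lemma supNorm_le_tsirelsonMap (M : C00 → ℝ) (x : C00) : supNorm x ≤ tsirelsonMap M x :=
  le_max_left _ _

lemma tsirelsonMap_le_l1Norm (hle : ∀ y, M y ≤ l1Norm y) (x : C00) :
    tsirelsonMap M x ≤ l1Norm x :=
  max_le (supNorm_le_l1Norm x) (admissibleSup_le_l1Norm hle x)

lemma tsirelsonMap_mono (hle' : ∀ y, M' y ≤ l1Norm y) (h : ∀ y, M y ≤ M' y) (x : C00) :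
    tsirelsonMap M x ≤ tsirelsonMap M' x :=
  max_le_max le_rfl (admissibleSup_mono hle' h x)

lemma tsirelsonMap_add_le (hle : ∀ y, M y ≤ l1Norm y) (hadd : ∀ y z, M (y + z) ≤ M y + M z)
    (x y : C00) : tsirelsonMap M (x + y) ≤ tsirelsonMap M x + tsirelsonMap M y :=
  max_le ((supNorm_add_le x y).trans (add_le_add (le_max_left _ _) (le_max_left _ _)))
    ((admissibleSup_add_le hle hadd x y).trans (add_le_add (le_max_right _ _) (le_max_right _ _)))

lemma tsirelsonMap_smul (hle : ∀ y, M y ≤ l1Norm y) (hhom : ∀ (c : ℝ) y, M (c • y) = |c| * M y)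
    (c : ℝ) (x : C00) : tsirelsonMap M (c • x) = |c| * tsirelsonMap M x := by
  rw [tsirelsonMap, tsirelsonMap, supNorm_smul, admissibleSup_smul hle hhom,
    mul_max_of_nonneg _ _ (abs_nonneg c)]

lemma tsirelsonMap_signSpread {ε : ℕ → ℝ} {κ : ℕ → ℕ} (hε : ∀ i, |ε i| = 1)
    (hκ : StrictMono κ) (hle : ∀ y, M y ≤ l1Norm y) (hsym : ∀ y, M (signSpread ε κ y) = M y)
    (x : C00) : tsirelsonMap M (signSpread ε κ x) = tsirelsonMap M x := by
  rw [tsirelsonMap, tsirelsonMap, supNorm_signSpread hε hκ.injective,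
    admissibleSup_signSpread hle hsym hκ]

end TsirelsonMap

structure IsPostfixedNorm (M : C00 → ℝ) : Prop where
  supNorm_le : ∀ x, supNorm x ≤ M x
  le_l1Norm : ∀ x, M x ≤ l1Norm x
  add_le : ∀ x y, M (x + y) ≤ M x + M y
  smul : ∀ (c : ℝ) x, M (c • x) = |c| * M x
  signSpread : ∀ ε κ, (∀ i, |ε i| = 1) → StrictMono κ → ∀ x, M (signSpread ε κ x) = M x
  le_tsirelsonMap : ∀ x, M x ≤ tsirelsonMap M x

lemma isPostfixedNorm_supNorm : IsPostfixedNorm supNorm where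
  supNorm_le _ := le_rfl
  le_l1Norm := supNorm_le_l1Norm
  add_le := supNorm_add_le
  smul := supNorm_smul
  signSpread _ _ hε hκ := supNorm_signSpread hε hκ.injective
  le_tsirelsonMap := supNorm_le_tsirelsonMap supNorm

lemma IsPostfixedNorm.tsirelsonMap {M : C00 → ℝ} (hM : IsPostfixedNorm M) :
    IsPostfixedNorm (tsirelsonMap M) where
  supNorm_le := supNorm_le_tsirelsonMap M
  le_l1Norm := tsirelsonMap_le_l1Norm hM.le_l1Norm
  add_le := tsirelsonMap_add_le hM.le_l1Norm hM.add_le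
  smul := tsirelsonMap_smul hM.le_l1Norm hM.smul
  signSpread ε κ hε hκ := tsirelsonMap_signSpread hε hκ hM.le_l1Norm (hM.signSpread ε κ hε hκ)
  le_tsirelsonMap := tsirelsonMap_mono (tsirelsonMap_le_l1Norm hM.le_l1Norm) hM.le_tsirelsonMap

instance : Nonempty {M // IsPostfixedNorm M} := ⟨⟨supNorm, isPostfixedNorm_supNorm⟩⟩

noncomputable def tsirelsonNorm (x : C00) : ℝ := ⨆ M : {M // IsPostfixedNorm M}, M.1 x

lemma le_tsirelsonNorm {M : C00 → ℝ} (hM : IsPostfixedNorm M) (x : C00) :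
    M x ≤ tsirelsonNorm x :=
  le_ciSup (f := fun M : {M // IsPostfixedNorm M} => M.1 x)
    ⟨l1Norm x, Set.forall_mem_range.2 fun M => M.2.le_l1Norm x⟩ ⟨M, hM⟩

lemma tsirelsonNorm_le {x : C00} {a : ℝ} (h : ∀ M, IsPostfixedNorm M → M x ≤ a) :
    tsirelsonNorm x ≤ a :=
  ciSup_le fun M => h M.1 M.2

lemma isPostfixedNorm_tsirelsonNorm : IsPostfixedNorm tsirelsonNorm where
  supNorm_le := le_tsirelsonNorm isPostfixedNorm_supNorm
  le_l1Norm _ := tsirelsonNorm_le fun _ hM => hM.le_l1Norm _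
  add_le x y := tsirelsonNorm_le fun _ hM =>
    (hM.add_le x y).trans (add_le_add (le_tsirelsonNorm hM x) (le_tsirelsonNorm hM y))
  smul := smul_eq_abs_mul_of_le
    (fun c x => tsirelsonNorm_le fun _ hM => (hM.smul c x).trans_le
      (mul_le_mul_of_nonneg_left (le_tsirelsonNorm hM x) (abs_nonneg c)))
    ((supNorm_nonneg 0).trans (le_tsirelsonNorm isPostfixedNorm_supNorm 0))
  signSpread ε κ hε hκ x := le_antisymm
    (tsirelsonNorm_le fun _ hM => (hM.signSpread ε κ hε hκ x).trans_le (le_tsirelsonNorm hM x))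
    (tsirelsonNorm_le fun _ hM =>
      (hM.signSpread ε κ hε hκ x).symm.trans_le (le_tsirelsonNorm hM _))
  le_tsirelsonMap x := tsirelsonNorm_le fun _ hM => (hM.le_tsirelsonMap x).trans
    (tsirelsonMap_mono (fun _ => tsirelsonNorm_le fun _ hM => hM.le_l1Norm _)
      (le_tsirelsonNorm hM) x)

lemma tsirelsonNorm_eq_tsirelsonMap (x : C00) :
    tsirelsonNorm x = tsirelsonMap tsirelsonNorm x :=
  le_antisymm (isPostfixedNorm_tsirelsonNorm.le_tsirelsonMap x)
    (le_tsirelsonNorm isPostfixedNorm_tsirelsonNorm.tsirelsonMap x)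

/-- existence of a 1-unconditional, 1-subsymmetric norm satisfying (2.2). -/
theorem statement7 :
    ∃ N : C00 → ℝ, IsNorm N ∧ Eq22 N ∧
      (∀ i, N (Finsupp.single i (1 : ℝ)) = 1) ∧
      (∀ (x : C00) (ε : ℕ → ℝ) (κ : ℕ → ℕ), (∀ i, ε i = 1 ∨ ε i = -1) → StrictMono κ →
        N (∑ i ∈ x.support, (ε i * x i) • Finsupp.single (κ i) (1 : ℝ)) = N x) := by
  have hN := isPostfixedNorm_tsirelsonNorm
  refine ⟨tsirelsonNorm, ⟨hN.add_le, hN.smul, ?_⟩, tsirelsonNorm_eq_tsirelsonMap, ?_, ?_⟩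
  · exact fun x hx => (supNorm_pos hx).trans_le (hN.supNorm_le x)
  · intro i
    refine le_antisymm ((hN.le_l1Norm _).trans_eq (l1Norm_single_one i)) ?_
    exact (supNorm_single_one i).symm.trans_le (hN.supNorm_le _)
  · intro x ε κ hε hκ
    refine hN.signSpread ε κ (fun i => ?_) hκ x
    rcases hε i with h | h <;> simp [h]
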